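/- Let G be a finite connected discrete graph without loops and let Γ be its associated metric graph. Let T be a spanning tree of Γ, let e be an edge of Γ not contained in T, and let Z(T, e) be the unique cycle in T ∪ e. Let D be an effective divisor on Γ equivalent to the canonical divisor K_G and whose support contains a point p_i from the relative interior of each edge e_i ≠ e contained in the complement of T. If f is a tropical rational function on Γ with div(f) = D − K_G, then the locus of points of Γ where f achieves its minimum value is equal to Z(T, e). -/

import Mathlib

open scoped Classical

noncomputable section

/-- A finite connected-type datum: a finite discrete (multi)graph without
loops together with a positive length attached to each edge; this is the
combinatorial model of a metric graph `Γ` (the geometric realization of the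
graph in which the edge `e` is an interval of length `len e`). -/
structure LooplessMetricGraph where
  /-- the vertices -/
  V : Type
  /-- the edges (multiple edges between two vertices are allowed) -/
  E : Type
  [fintypeV : Fintype V]
  [fintypeE : Fintype E]
  nonemptyV : Nonempty V
  src : E → V
  dst : E → V
  /-- the graph has no loops -/
  no_loops : ∀ e, src e ≠ dst e
  /-- the length of each edge of the metric graph -/
  len : E → ℝ
  len_pos : ∀ e, 0 < len e

attribute [instance] LooplessMetricGraph.fintypeV LooplessMetricGraph.fintypeE

namespace LooplessMetricGraph

variable (G : LooplessMetricGraph)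

/-- The points of the metric graph `Γ`: a vertex, or an interior point of an
edge `e` at arclength distance `t ∈ (0, len e)` from its source. -/
abbrev Point : Type := G.V ⊕ (Σ e : G.E, {t : ℝ // 0 < t ∧ t < G.len e})

/-- Two vertices are joined by an edge belonging to the edge set `S`. -/
def Step (S : Set G.E) (v w : G.V) : Prop :=
  ∃ e ∈ S, (G.src e = v ∧ G.dst e = w) ∨ (G.src e = w ∧ G.dst e = v)

/-- The vertices `v` and `w` are joined by a path of edges in `S`. -/
def Reaches (S : Set G.E) (v w : G.V) : Prop :=
  Relation.ReflTransGen (G.Step S) v w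

/-- The edge set `S` connects all vertices of the graph. -/
def SpanningConnected (S : Set G.E) : Prop := ∀ v w, G.Reaches S v w

/-- The graph is connected. -/
def Connected : Prop := G.SpanningConnected Set.univ

/-- `T` is a spanning tree: its edges connect all the vertices, and removing
any one of them destroys this property. -/
def IsSpanningTree (T : Set G.E) : Prop :=
  G.SpanningConnected T ∧ ∀ e ∈ T, ¬ G.SpanningConnected (T \ {e})

/-- An edge is a bridge if it is not contained in any non-trivial cycle,
equivalently (for a connected graph) if its removal disconnects the graph. -/
def IsBridge (e : G.E) : Prop := ¬ G.SpanningConnected (Set.univ \ {e})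

/-- The set of points of `Γ` lying on the closed edge `e`. -/
def onEdge (e : G.E) : Set G.Point :=
  {p | p = Sum.inl (G.src e) ∨ p = Sum.inl (G.dst e) ∨
    ∃ t, p = Sum.inr ⟨e, t⟩}

/-- For a spanning tree `T` and an edge `e ∉ T`, the unique cycle `Z(T, e)`
in `T ∪ {e}`, as a set of points of `Γ`: the union of the closed edges of
`T ∪ {e}` whose removal does not disconnect `T ∪ {e}`. -/
def cycleSet (T : Set G.E) (e : G.E) : Set G.Point :=
  ⋃ e' ∈ {e' ∈ T ∪ {e} | G.SpanningConnected ((T ∪ {e}) \ {e'})}, G.onEdge e'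

/-- The valency of a vertex. -/
def valAt (v : G.V) : ℕ :=
  (Finset.univ.filter fun e => G.src e = v).card +
    (Finset.univ.filter fun e => G.dst e = v).card

/-- The canonical divisor `K_G = Σ_v (val(v) − 2)·v` of the graph, as a
function on the points of `Γ` supported on the vertices. -/
def canonical : G.Point → ℤ :=
  fun p => match p with
    | Sum.inl v => (G.valAt v : ℤ) - 2
    | Sum.inr _ => 0

/-- The restriction of a function on `Γ` to the closed edge `e`, as a
function of the arclength parameter `t ∈ [0, len e]` (junk values outside
this interval). -/
def edgeFun (f : G.Point → ℝ) (e : G.E) : ℝ → ℝ := fun t =>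
  if h : 0 < t ∧ t < G.len e then f (Sum.inr ⟨e, t, h⟩)
  else if t ≤ 0 then f (Sum.inl (G.src e)) else f (Sum.inl (G.dst e))

end LooplessMetricGraph

/-- `g` is piecewise affine with integer slopes on the interval `[a, b]`. -/
def PwIntAffineOn (g : ℝ → ℝ) (a b : ℝ) : Prop :=
  ∃ (n : ℕ) (t : Fin (n + 1) → ℝ) (s : Fin n → ℤ) (c : Fin n → ℝ),
    t 0 = a ∧ t (Fin.last n) = b ∧ Monotone t ∧
    ∀ i : Fin n, ∀ x ∈ Set.Icc (t i.castSucc) (t i.succ),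
      g x = (s i : ℝ) * x + c i

/-- `g` has outgoing slope `s` at `t` in the increasing direction. -/
def HasRightSlope (g : ℝ → ℝ) (t s : ℝ) : Prop :=
  Filter.Tendsto (fun h : ℝ => (g (t + h) - g t) / h)
    (nhdsWithin 0 (Set.Ioi 0)) (nhds s)

/-- `g` has outgoing slope `s` at `t` in the decreasing direction. -/
def HasLeftSlope (g : ℝ → ℝ) (t s : ℝ) : Prop :=
  Filter.Tendsto (fun h : ℝ => (g (t - h) - g t) / h)
    (nhdsWithin 0 (Set.Ioi 0)) (nhds s)

namespace LooplessMetricGraph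

variable (G : LooplessMetricGraph)

/-- `f` is a tropical rational function on `Γ`: a continuous piecewise affine
real-valued function with integer slopes. -/
def IsTropicalRational (f : G.Point → ℝ) : Prop :=
  ∀ e : G.E, PwIntAffineOn (G.edgeFun f e) 0 (G.len e)

/-- The sum of the outgoing slopes of `f` at the point `p` of `Γ` equals `c`. -/
def OutSlopeSum (f : G.Point → ℝ) (p : G.Point) (c : ℝ) : Prop :=
  match p with
  | Sum.inl v => ∃ sOut sIn : G.E → ℝ,
      (∀ e, G.src e = v → HasRightSlope (G.edgeFun f e) 0 (sOut e)) ∧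
      (∀ e, G.dst e = v → HasLeftSlope (G.edgeFun f e) (G.len e) (sIn e)) ∧
      (∑ e ∈ Finset.univ.filter fun e => G.src e = v, sOut e) +
        (∑ e ∈ Finset.univ.filter fun e => G.dst e = v, sIn e) = c
  | Sum.inr q => ∃ sr sl : ℝ,
      HasRightSlope (G.edgeFun f q.1) q.2.1 sr ∧
      HasLeftSlope (G.edgeFun f q.1) q.2.1 sl ∧ sr + sl = c

/-- `div(f) = D`: `f` is a tropical rational function on `Γ` and, at every
point `p` of `Γ`, the sum of the incoming slopes of `f` (that is, minus the
sum of the outgoing slopes) equals `D p`. -/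
def HasDivisor (f : G.Point → ℝ) (D : G.Point → ℤ) : Prop :=
  G.IsTropicalRational f ∧ ∀ p, G.OutSlopeSum f p (-(D p : ℝ))

end LooplessMetricGraph


/-!
Let `m` be the minimum of `f`. At an interior point where `f = m` both outgoing slopes are
nonnegative and add up to `-D ≤ 0`, so they vanish: `f` is locally constant there and `D` is zero.
By connectedness `f ≡ m` on the whole closed edge. At a vertex `v` with `f v = m` the outgoing
slopes are nonnegative integers adding up to `val v - 2 - D v ≤ val v - 2`, so at least two edges
at `v` have slope `0`, and these lie in the minimum locus. Hence the minimum locus is the union of a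
nonempty set `EM` of closed edges in which no vertex has degree one, and `EM ⊆ T ∪ {e}` because
`D` vanishes on `EM`. Such an edge set is the cycle of `T ∪ {e}`: a forest with an edge has two
leaves, and an edge of `EM` off the cycle, or a cycle edge missing from `EM`, cuts out a forest of
edges of `EM` whose leaves would have to be leaves of `EM`.
-/

open Set Filter Topology

lemma Fin.exists_castSucc_le_lt_succ {n : ℕ} (τ : Fin (n + 1) → ℝ) {x : ℝ} (h0 : τ 0 ≤ x)
    (hx : x < τ (Fin.last n)) : ∃ j : Fin n, τ j.castSucc ≤ x ∧ x < τ j.succ := by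
  have hne : (Finset.univ.filter fun i => τ i ≤ x).Nonempty := ⟨0, by simpa using h0⟩
  set i₀ := (Finset.univ.filter fun i => τ i ≤ x).max' hne
  have hi₀ : τ i₀ ≤ x := (Finset.mem_filter.1 (Finset.max'_mem _ hne)).2
  have hlast : i₀ ≠ Fin.last n := fun h => (h ▸ hi₀).not_gt hx
  refine ⟨i₀.castPred hlast, by simpa using hi₀, lt_of_not_ge fun h => ?_⟩
  have : (i₀.castPred hlast).succ ≤ i₀ :=
    Finset.le_max' (Finset.univ.filter fun i => τ i ≤ x) _ (by simpa using h)
  exact (Fin.castSucc_lt_succ (i := i₀.castPred hlast)).not_ge (by simpa using this)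

lemma Fin.exists_castSucc_lt_le_succ {n : ℕ} (τ : Fin (n + 1) → ℝ) {x : ℝ} (h0 : τ 0 < x)
    (hx : x ≤ τ (Fin.last n)) : ∃ j : Fin n, τ j.castSucc < x ∧ x ≤ τ j.succ := by
  obtain ⟨j, h1, h2⟩ := Fin.exists_castSucc_le_lt_succ (fun i => -τ i.rev) (x := -x)
    (by simpa using hx) (by simpa using h0)
  exact ⟨j.rev, by simpa [Fin.rev_succ] using h2, by simpa [Fin.rev_castSucc] using h1⟩

lemma Finset.card_sub_card_filter_le_sum {ι : Type*} (s : Finset ι) (P : Set ι) (w : ι → ℝ)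
    (h : ∀ i ∈ s, (if i ∈ P then 0 else 1 : ℝ) ≤ w i) :
    (s.card : ℝ) - (s.filter (· ∈ P)).card ≤ ∑ i ∈ s, w i := by
  have hsplit := Finset.card_filter_add_card_filter_not (s := s) (· ∈ P)
  have hite : ∑ i ∈ s, (if i ∈ P then 0 else 1 : ℝ) = (s.filter (· ∉ P)).card := by
    rw [Finset.sum_ite, Finset.sum_const_zero, zero_add, Finset.sum_const, nsmul_one]
  have := Finset.sum_le_sum h
  rw [hite] at this
  have hcast : ((s.filter (· ∈ P)).card : ℝ) + (s.filter (· ∉ P)).card = s.card := by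
    exact_mod_cast hsplit
  linarith

namespace PwIntAffineOn

variable {g : ℝ → ℝ} {a b t : ℝ}

lemma exists_right (hg : PwIntAffineOn g a b) (hat : a ≤ t) (htb : t < b) :
    ∃ k : ℤ, ∃ δ > 0, t + δ ≤ b ∧ ∀ x ∈ Icc t (t + δ), g x = g t + k * (x - t) := by
  obtain ⟨n, τ, k, c, h0, hn, hmono, haff⟩ := hg
  obtain ⟨j, hj₁, hj₂⟩ := Fin.exists_castSucc_le_lt_succ τ (h0 ▸ hat) (hn ▸ htb)
  have hjb : τ j.succ ≤ b := hn ▸ hmono (Fin.le_last _)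
  refine ⟨k j, τ j.succ - t, by linarith, by linarith, fun x hx => ?_⟩
  rw [haff j x ⟨hj₁.trans hx.1, by linarith [hx.2]⟩, haff j t ⟨hj₁, hj₂.le⟩]
  ring

lemma exists_left (hg : PwIntAffineOn g a b) (hat : a < t) (htb : t ≤ b) :
    ∃ k : ℤ, ∃ δ > 0, a ≤ t - δ ∧ ∀ x ∈ Icc (t - δ) t, g x = g t + k * (t - x) := by
  obtain ⟨n, τ, k, c, h0, hn, hmono, haff⟩ := hg
  obtain ⟨j, hj₁, hj₂⟩ := Fin.exists_castSucc_lt_le_succ τ (h0 ▸ hat) (hn ▸ htb)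
  have haj : a ≤ τ j.castSucc := h0 ▸ hmono (Fin.zero_le _)
  refine ⟨-k j, t - τ j.castSucc, by linarith, by linarith, fun x hx => ?_⟩
  rw [haff j x ⟨by linarith [hx.1], hx.2.trans hj₂⟩, haff j t ⟨hj₁.le, hj₂⟩]
  push_cast
  ring

lemma continuousOn (hg : PwIntAffineOn g a b) : ContinuousOn g (Icc a b) := by
  intro t ht
  rw [← Icc_union_Icc_eq_Icc ht.1 ht.2]
  refine ContinuousWithinAt.union ?_ ?_
  · rcases ht.1.eq_or_lt with rfl | hat
    · simp [continuousWithinAt_singleton]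
    obtain ⟨k, δ, hδ, -, haff⟩ := hg.exists_left hat ht.2
    have : ContinuousWithinAt g (Icc (t - δ) t) t := (ContinuousOn.congr (by fun_prop) haff) t
      ⟨by linarith, le_rfl⟩
    exact (continuousWithinAt_Icc_iff_Iic hat).2
      ((continuousWithinAt_Icc_iff_Iic (by linarith)).1 this)
  · rcases ht.2.eq_or_lt with rfl | htb
    · simp [continuousWithinAt_singleton]
    obtain ⟨k, δ, hδ, -, haff⟩ := hg.exists_right ht.1 htb
    have : ContinuousWithinAt g (Icc t (t + δ)) t := (ContinuousOn.congr (by fun_prop) haff) t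
      ⟨le_rfl, by linarith⟩
    exact (continuousWithinAt_Icc_iff_Ici htb).2
      ((continuousWithinAt_Icc_iff_Ici (by linarith)).1 this)

end PwIntAffineOn

section Slopes

variable {g : ℝ → ℝ} {a b t s : ℝ}

lemma HasRightSlope.nonneg (h : HasRightSlope g t s) (hmin : ∀ x, g t ≤ g x) : 0 ≤ s :=
  ge_of_tendsto h (eventually_nhdsWithin_of_forall fun x (hx : 0 < x) =>
    div_nonneg (sub_nonneg.2 (hmin _)) hx.le)

lemma HasLeftSlope.nonneg (h : HasLeftSlope g t s) (hmin : ∀ x, g t ≤ g x) : 0 ≤ s :=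
  ge_of_tendsto h (eventually_nhdsWithin_of_forall fun x (hx : 0 < x) =>
    div_nonneg (sub_nonneg.2 (hmin _)) hx.le)

lemma HasRightSlope.eq_of_affine (h : HasRightSlope g t s) {k δ : ℝ} (hδ : 0 < δ)
    (haff : ∀ x ∈ Icc t (t + δ), g x = g t + k * (x - t)) : s = k := by
  refine tendsto_nhds_unique h (tendsto_const_nhds.congr' ?_)
  filter_upwards [Ioo_mem_nhdsGT hδ] with x hx
  rw [haff (t + x) ⟨by linarith [hx.1], by linarith [hx.2]⟩]
  field_simp [hx.1.ne']
  ring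

lemma HasLeftSlope.eq_of_affine (h : HasLeftSlope g t s) {k δ : ℝ} (hδ : 0 < δ)
    (haff : ∀ x ∈ Icc (t - δ) t, g x = g t + k * (t - x)) : s = k := by
  refine tendsto_nhds_unique h (tendsto_const_nhds.congr' ?_)
  filter_upwards [Ioo_mem_nhdsGT hδ] with x hx
  rw [haff (t - x) ⟨by linarith [hx.2], by linarith [hx.1]⟩]
  field_simp [hx.1.ne']
  ring

lemma PwIntAffineOn.affine_right_of_hasRightSlope (hg : PwIntAffineOn g a b) (hat : a ≤ t)
    (htb : t < b) (h : HasRightSlope g t s) :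
    ∃ k : ℤ, s = k ∧ ∃ δ > 0, t + δ ≤ b ∧ ∀ x ∈ Icc t (t + δ), g x = g t + k * (x - t) := by
  obtain ⟨k, δ, hδ, hδb, haff⟩ := hg.exists_right hat htb
  exact ⟨k, h.eq_of_affine hδ haff, δ, hδ, hδb, haff⟩

lemma PwIntAffineOn.affine_left_of_hasLeftSlope (hg : PwIntAffineOn g a b) (hat : a < t)
    (htb : t ≤ b) (h : HasLeftSlope g t s) :
    ∃ k : ℤ, s = k ∧ ∃ δ > 0, a ≤ t - δ ∧ ∀ x ∈ Icc (t - δ) t, g x = g t + k * (t - x) := by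
  obtain ⟨k, δ, hδ, hδa, haff⟩ := hg.exists_left hat htb
  exact ⟨k, h.eq_of_affine hδ haff, δ, hδ, hδa, haff⟩

end Slopes

lemma ContinuousOn.eqOn_const_of_locally_const {g : ℝ → ℝ} {a b m x₀ : ℝ}
    (hg : ContinuousOn g (Icc a b)) (hloc : ∀ x ∈ Ioo a b, g x = m → ∀ᶠ y in 𝓝 x, g y = m)
    (hx₀ : x₀ ∈ Ioo a b) (h₀ : g x₀ = m) : EqOn g (fun _ => m) (Icc a b) := by
  have hIoo : Ioo a b ⊆ {x | ∀ᶠ y in 𝓝 x, g y = m} := by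
    refine isPreconnected_Ioo.subset_of_closure_inter_subset isOpen_setOfPred_eventually_nhds
      ⟨x₀, hx₀, hloc x₀ hx₀ h₀⟩ fun x ⟨hxu, hx⟩ => hloc x hx ?_
    have hgx :=
      (hg.continuousAt (Icc_mem_nhds hx.1 hx.2)).continuousWithinAt.mem_closure_image hxu
    have himage : g '' {x | ∀ᶠ y in 𝓝 x, g y = m} ⊆ {m} := by
      rintro _ ⟨y, hy, rfl⟩
      exact hy.self_of_nhds
    simpa using closure_mono himage hgx
  have hab : a < b := hx₀.1.trans hx₀.2
  exact EqOn.of_subset_closure (fun x hx => (hIoo hx).self_of_nhds) hg continuousOn_const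
    Ioo_subset_Icc_self (closure_Ioo hab.ne).ge

namespace LooplessMetricGraph

variable {G : LooplessMetricGraph}

section Reachability

variable {S S' : Set G.E} {c : G.E} {u v w : G.V}

lemma Step.symm (h : G.Step S v w) : G.Step S w v :=
  let ⟨c, hc, h⟩ := h; ⟨c, hc, h.symm⟩

lemma Step.mono (hS : S ⊆ S') (h : G.Step S v w) : G.Step S' v w :=
  let ⟨c, hc, h⟩ := h; ⟨c, hS hc, h⟩

lemma step_src_dst (hc : c ∈ S) : G.Step S (G.src c) (G.dst c) := ⟨c, hc, Or.inl ⟨rfl, rfl⟩⟩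

lemma Reaches.refl : G.Reaches S v v := Relation.ReflTransGen.refl

lemma Reaches.trans (h₁ : G.Reaches S u v) (h₂ : G.Reaches S v w) : G.Reaches S u w :=
  Relation.ReflTransGen.trans h₁ h₂

lemma Reaches.tail (h₁ : G.Reaches S u v) (h₂ : G.Step S v w) : G.Reaches S u w :=
  Relation.ReflTransGen.tail h₁ h₂

lemma Reaches.mono (hS : S ⊆ S') (h : G.Reaches S v w) : G.Reaches S' v w :=
  Relation.ReflTransGen.mono (fun _ _ => Step.mono hS) _ _ h

lemma Reaches.symm (h : G.Reaches S v w) : G.Reaches S w v := by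
  induction h with
  | refl => exact .refl
  | tail _ hstep ih => exact (Reaches.refl.tail hstep.symm).trans ih

lemma Reaches.diff_singleton (h : G.Reaches S v w)
    (hc : G.Reaches (S \ {c}) (G.src c) (G.dst c)) : G.Reaches (S \ {c}) v w := by
  induction h with
  | refl => exact .refl
  | tail _ hstep ih =>
    obtain ⟨d, hd, hvw⟩ := hstep
    by_cases hdc : d = c
    · subst hdc
      rcases hvw with ⟨rfl, rfl⟩ | ⟨rfl, rfl⟩
      exacts [ih.trans hc, ih.trans hc.symm]
    · exact ih.tail ⟨d, ⟨hd, hdc⟩, hvw⟩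

lemma Reaches.of_insert (h : G.Reaches (insert c S) u w) :
    G.Reaches S u w ∨ G.Reaches S u (G.src c) ∨ G.Reaches S u (G.dst c) := by
  induction h with
  | refl => exact Or.inl .refl
  | tail _ hstep ih =>
    obtain ⟨d, hd, hvw⟩ := hstep
    rcases hd with rfl | hd
    · rcases ih with ih | ih
      · rcases hvw with ⟨rfl, -⟩ | ⟨-, rfl⟩
        exacts [Or.inr (Or.inl ih), Or.inr (Or.inr ih)]
      · exact Or.inr ih
    · exact ih.imp_left fun ih => ih.tail ⟨d, hd, hvw⟩

lemma reaches_src_or_reaches_dst (hS : G.SpanningConnected S) (hc : c ∈ S) (r : G.V) :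
    G.Reaches (S \ {c}) r (G.src c) ∨ G.Reaches (S \ {c}) r (G.dst c) := by
  have h := hS r (G.src c)
  rw [← Set.insert_sdiff_self_of_mem hc] at h
  exact h.of_insert.elim Or.inl id

lemma reaches_src_iff_reaches_dst {x : G.E} (hx : x ∈ S) (hxc : x ≠ c) (r : G.V) :
    G.Reaches (S \ {c}) r (G.src x) ↔ G.Reaches (S \ {c}) r (G.dst x) :=
  have hstep : G.Step (S \ {c}) (G.src x) (G.dst x) := step_src_dst ⟨hx, hxc⟩
  ⟨fun h => h.tail hstep, fun h => h.tail hstep.symm⟩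

end Reachability

section Bridges

variable (G) in
def IsBridgeIn (S : Set G.E) (c : G.E) : Prop := ¬ G.Reaches (S \ {c}) (G.src c) (G.dst c)

variable (G) in
/-- When `c` is a bridge of `S`, the endpoint of `c` on the other side of `c` from `r`. -/
def farEnd (S : Set G.E) (c : G.E) (r : G.V) : G.V :=
  if G.Reaches (S \ {c}) r (G.src c) then G.dst c else G.src c

variable (G) in
def IsEndpoint (c : G.E) (v : G.V) : Prop := G.src c = v ∨ G.dst c = v

variable {S T : Set G.E} {c : G.E} {r : G.V}

lemma IsSpanningTree.isBridgeIn (hT : G.IsSpanningTree T) (hc : c ∈ T) : G.IsBridgeIn T c :=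
  fun h => hT.2 c hc fun v w => (hT.1 v w).diff_singleton h

lemma reaches_of_isEndpoint {z v : G.V} (hz : G.IsEndpoint c z) (hv : G.IsEndpoint c v)
    (hc : c ∈ S) : G.Reaches S z v := by
  rcases hz with rfl | rfl <;> rcases hv with rfl | rfl
  exacts [.refl, Reaches.refl.tail (step_src_dst hc), Reaches.refl.tail (step_src_dst hc).symm,
    .refl]

lemma farEnd_isEndpoint : G.IsEndpoint c (G.farEnd S c r) := by
  unfold farEnd
  split_ifs
  exacts [Or.inr rfl, Or.inl rfl]

lemma IsBridgeIn.not_reaches_farEnd (hc : G.IsBridgeIn S c) :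
    ¬ G.Reaches (S \ {c}) r (G.farEnd S c r) := by
  unfold farEnd
  split_ifs with h
  exacts [fun h' => hc (h.symm.trans h'), h]

lemma IsBridgeIn.farEnd_ne (hc : G.IsBridgeIn S c) : G.farEnd S c r ≠ r :=
  fun h => hc.not_reaches_farEnd (by rw [h]; exact Reaches.refl)

lemma exists_reaches_isEndpoint (hS : G.SpanningConnected S) (hc : c ∈ S) (r : G.V) :
    ∃ y, G.Reaches (S \ {c}) r y ∧ G.IsEndpoint c y := by
  rcases reaches_src_or_reaches_dst hS hc r with h | h
  exacts [⟨_, h, Or.inl rfl⟩, ⟨_, h, Or.inr rfl⟩]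

lemma farEnd_injOn {F : Set G.E} (hS : G.SpanningConnected S) (hFS : F ⊆ S)
    (hbr : ∀ c ∈ F, G.IsBridgeIn S c) (r : G.V) : Set.InjOn (fun c => G.farEnd S c r) F := by
  intro c₁ hc₁ c₂ hc₂ (heq : G.farEnd S c₁ r = G.farEnd S c₂ r)
  by_contra hne
  have hv₁ : G.IsEndpoint c₁ (G.farEnd S c₁ r) := farEnd_isEndpoint
  have hv₂ : G.IsEndpoint c₂ (G.farEnd S c₁ r) := heq ▸ farEnd_isEndpoint
  have hu₁ : ¬ G.Reaches (S \ {c₁}) r (G.farEnd S c₁ r) := (hbr c₁ hc₁).not_reaches_farEnd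
  have hu₂ : ¬ G.Reaches (S \ {c₂}) r (G.farEnd S c₁ r) :=
    heq ▸ (hbr c₂ hc₂).not_reaches_farEnd
  have hc₁' : c₁ ∈ S \ {c₂} := ⟨hFS hc₁, hne⟩
  have hc₂' : c₂ ∈ S \ {c₁} := ⟨hFS hc₂, Ne.symm hne⟩
  have hsub₁ : (S \ {c₂}) \ {c₁} ⊆ S \ {c₁} := fun x hx => ⟨hx.1.1, hx.2⟩
  have hvia₁ : ∀ z, G.IsEndpoint c₁ z → ¬ G.Reaches ((S \ {c₂}) \ {c₁}) r z := fun z hz h =>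
    hu₂ ((h.mono Set.sdiff_subset).trans (reaches_of_isEndpoint hz hv₁ hc₁'))
  obtain ⟨y, hy, hyc₂⟩ := exists_reaches_isEndpoint hS (hFS hc₂) r
  rw [← Set.insert_sdiff_self_of_mem hc₁'] at hy
  rcases hy.of_insert with h | h | h
  · exact hu₁ ((h.mono hsub₁).trans (reaches_of_isEndpoint hyc₂ hv₂ hc₂'))
  · exact hvia₁ _ (Or.inl rfl) h
  · exact hvia₁ _ (Or.inr rfl) h

end Bridges

section Degrees

variable (G) in
def degreeIn (S : Set G.E) (v : G.V) : ℕ :=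
  (Finset.univ.filter fun c => G.src c = v ∧ c ∈ S).card +
    (Finset.univ.filter fun c => G.dst c = v ∧ c ∈ S).card

variable (G) in
def Leafless (S : Set G.E) : Prop := ∀ v, G.degreeIn S v ≠ 1

variable {S S' : Set G.E} {v : G.V}

lemma sum_degreeIn (S : Set G.E) :
    ∑ v, G.degreeIn S v = 2 * (Finset.univ.filter (· ∈ S)).card := by
  simp only [degreeIn, Finset.sum_add_distrib, two_mul]
  congr 1
  · rw [Finset.card_eq_sum_card_fiberwise (f := G.src) (t := Finset.univ)
      fun _ _ => Finset.mem_univ _]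
    simp [Finset.filter_filter, and_comm]
  · rw [Finset.card_eq_sum_card_fiberwise (f := G.dst) (t := Finset.univ)
      fun _ _ => Finset.mem_univ _]
    simp [Finset.filter_filter, and_comm]

lemma degreeIn_pos_iff : 0 < G.degreeIn S v ↔ ∃ c ∈ S, G.IsEndpoint c v := by
  simp only [degreeIn, Nat.add_pos_iff_pos_or_pos, Finset.card_pos, Finset.filter_nonempty_iff,
    Finset.mem_univ, true_and, IsEndpoint]
  constructor
  · rintro (⟨c, h, hc⟩ | ⟨c, h, hc⟩)
    exacts [⟨c, hc, Or.inl h⟩, ⟨c, hc, Or.inr h⟩]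
  · rintro ⟨c, hc, h | h⟩
    exacts [Or.inl ⟨c, h, hc⟩, Or.inr ⟨c, h, hc⟩]

lemma degreeIn_le_degreeIn (h : ∀ c ∈ S, G.IsEndpoint c v → c ∈ S') :
    G.degreeIn S v ≤ G.degreeIn S' v := by
  refine add_le_add (Finset.card_le_card fun c hc => ?_) (Finset.card_le_card fun c hc => ?_) <;>
    simp only [Finset.mem_filter, Finset.mem_univ, true_and] at hc ⊢
  exacts [⟨hc.1, h c hc.2 (Or.inl hc.1)⟩, ⟨hc.1, h c hc.2 (Or.inr hc.1)⟩]

lemma degreeIn_le_one {c : G.E} (hS : ∀ x ∈ S, x = c) : G.degreeIn S v ≤ 1 := by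
  have hle : ∀ p : G.E → Prop, (Finset.univ.filter fun x => p x ∧ x ∈ S).card ≤ 1 :=
    fun p => Finset.card_le_one.2 fun a ha b hb => by
      simp only [Finset.mem_filter] at ha hb
      rw [hS a ha.2.2, hS b hb.2.2]
  unfold degreeIn
  rcases Nat.eq_zero_or_pos (Finset.univ.filter fun x => G.src x = v ∧ x ∈ S).card with h | h
  · rw [h, zero_add]
    exact hle _
  · obtain ⟨a, ha⟩ := Finset.card_pos.1 h
    simp only [Finset.mem_filter, Finset.mem_univ, true_and] at ha
    have hdst : (Finset.univ.filter fun x => G.dst x = v ∧ x ∈ S).card = 0 :=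
      Finset.card_eq_zero.2 (Finset.filter_eq_empty_iff.2 fun x _ hx => by
        obtain rfl := hS a ha.2
        obtain rfl := hS x hx.2
        exact G.no_loops x (ha.1.trans hx.1.symm))
    rw [hdst, add_zero]
    exact hle _

lemma exists_mem_ne_of_one_lt_degreeIn (h : 1 < G.degreeIn S v) (c : G.E) :
    ∃ x ∈ S, x ≠ c ∧ G.IsEndpoint x v := by
  by_contra! h'
  have := (degreeIn_le_degreeIn (S' := {c}) fun x hx hxv =>
    by_contra fun hxc => h' x hx hxc hxv).trans (degreeIn_le_one fun x hx => hx)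
  omega

end Degrees

section Forests

variable {S F : Set G.E}

/-- The far ends of the edges of `F`, seen from a root, are distinct vertices other than the
root, so `F` has fewer edges than vertices; degrees at least two away from `r` would force the
opposite. -/
theorem exists_ne_degreeIn_eq_one (hS : G.SpanningConnected S) (hFS : F ⊆ S)
    (hbr : ∀ c ∈ F, G.IsBridgeIn S c) (hF : F.Nonempty) (r : G.V) :
    ∃ w ≠ r, G.degreeIn F w = 1 := by
  by_contra! h
  set W := Finset.univ.filter fun v => ∃ c ∈ F, G.IsEndpoint c v
  have hW : ∀ v, v ∈ W ↔ 0 < G.degreeIn F v := fun v => by simp [W, degreeIn_pos_iff]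
  obtain ⟨ρ, hρW, hρr⟩ : ∃ ρ ∈ W, r ∈ W → ρ = r := by
    by_cases hr : r ∈ W
    · exact ⟨r, hr, fun _ => rfl⟩
    · obtain ⟨c, hc⟩ := hF
      exact ⟨G.src c, by simpa [W] using ⟨c, hc, Or.inl rfl⟩, fun h => absurd h hr⟩
  have hcard : (Finset.univ.filter (· ∈ F)).card ≤ (W.erase ρ).card := by
    refine Finset.card_le_card_of_injOn (fun c => G.farEnd S c ρ) (fun c hc => ?_) ?_
    · have hc : c ∈ F := by simpa using hc
      exact Finset.mem_erase.2 ⟨(hbr c hc).farEnd_ne,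
        by simpa [W] using ⟨c, hc, farEnd_isEndpoint⟩⟩
    · simpa using farEnd_injOn hS hFS hbr ρ
  have hdeg : ∀ v ∈ W.erase ρ, 2 ≤ G.degreeIn F v := fun v hv => by
    obtain ⟨hvρ, hvW⟩ := Finset.mem_erase.1 hv
    have := h v fun hvr => hvρ (hvr ▸ (hρr (hvr ▸ hvW)).symm)
    have := (hW v).1 hvW
    omega
  have hsum : 2 * (W.erase ρ).card + 1 ≤ ∑ v, G.degreeIn F v :=
    calc 2 * (W.erase ρ).card + 1 ≤ ∑ v ∈ W.erase ρ, G.degreeIn F v + G.degreeIn F ρ := by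
          have h₂ : (W.erase ρ).card • 2 ≤ ∑ v ∈ W.erase ρ, G.degreeIn F v :=
            Finset.card_nsmul_le_sum _ _ _ hdeg
          have := (hW ρ).1 hρW
          rw [smul_eq_mul] at h₂
          omega
      _ = ∑ v ∈ W, G.degreeIn F v := Finset.sum_erase_add _ _ hρW
      _ ≤ ∑ v, G.degreeIn F v := Finset.sum_le_sum_of_subset (Finset.subset_univ _)
  rw [sum_degreeIn] at hsum
  omega

end Forests

variable (G) in
def cycleEdges (T : Set G.E) (e : G.E) : Set G.E :=
  {c | c ∈ T ∪ {e} ∧ G.SpanningConnected ((T ∪ {e}) \ {c})}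

section Cycle

variable {T EM : Set G.E} {c e : G.E}

lemma spanningConnected_union_diff_iff (hT : G.IsSpanningTree T) (he : e ∉ T) (hc : c ∈ T) :
    G.SpanningConnected ((T ∪ {e}) \ {c}) ↔ ¬ G.Reaches (T \ {c}) (G.src e) (G.dst e) := by
  have hsub : T \ {c} ⊆ (T ∪ {e}) \ {c} := Set.sdiff_subset_sdiff_left Set.subset_union_left
  have hstep : G.Step ((T ∪ {e}) \ {c}) (G.src e) (G.dst e) :=
    step_src_dst ⟨Or.inr rfl, fun h => he (Set.mem_singleton_iff.1 h ▸ hc)⟩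
  constructor
  · intro hS hr
    refine hT.isBridgeIn hc (((hS (G.src c) (G.dst c)).diff_singleton (c := e) ?_).mono ?_)
    · exact hr.mono fun x hx => ⟨hsub hx, fun h => he (Set.mem_singleton_iff.1 h ▸ hx.1)⟩
    · exact fun x hx => ⟨hx.1.1.resolve_right hx.2, hx.1.2⟩
  · intro hr v w
    refine ((hT.1 v w).mono Set.subset_union_left).diff_singleton ?_
    rcases reaches_src_or_reaches_dst hT.1 hc (G.src e) with h₁ | h₁ <;>
      rcases reaches_src_or_reaches_dst hT.1 hc (G.dst e) with h₂ | h₂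
    · exact absurd (h₁.trans h₂.symm) hr
    · exact ((h₁.symm.mono hsub).tail hstep).trans (h₂.mono hsub)
    · exact ((h₂.symm.mono hsub).tail hstep.symm).trans (h₁.mono hsub)
    · exact absurd (h₁.trans h₂.symm) hr

/-- If `C` is a union of components of `T \ {d}`, the edges of `EM` other than `e` meeting `C`
form a forest in which only `r` could have degree one; hence there are none. -/
lemma Leafless.src_dst_not_mem (hleaf : G.Leafless EM) (hT : G.IsSpanningTree T)
    (hEM : EM ⊆ T ∪ {e}) {C : Set G.V} {d : G.E} {r : G.V}
    (hC : ∀ x ∈ T, x ≠ d → (G.src x ∈ C ↔ G.dst x ∈ C))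
    (he : ∀ w ∈ C, G.IsEndpoint e w → w = r)
    (hd : d ∈ EM → ∀ w ∉ C, G.IsEndpoint d w → w = r)
    {x : G.E} (hx : x ∈ EM) (hxe : x ≠ e) : G.src x ∉ C ∧ G.dst x ∉ C := by
  by_contra hxC
  set F : Set G.E := {y | y ∈ EM ∧ y ≠ e ∧ (G.src y ∈ C ∨ G.dst y ∈ C)}
  have hFT : F ⊆ T := fun y hy => (hEM hy.1).resolve_right hy.2.1
  obtain ⟨w, hwr, hw⟩ := exists_ne_degreeIn_eq_one hT.1 hFT
    (fun y hy => hT.isBridgeIn (hFT hy)) ⟨x, hx, hxe, by tauto⟩ r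
  obtain ⟨y, hyF, hyw⟩ := degreeIn_pos_iff.1 (hw ▸ Nat.one_pos)
  by_cases hwC : w ∈ C
  · have hle : G.degreeIn EM w ≤ G.degreeIn F w := degreeIn_le_degreeIn fun z hz hzw =>
      ⟨hz, fun hze => hwr (he w hwC (hze ▸ hzw)),
        Or.imp (fun h : G.src z = w => h ▸ hwC) (fun h : G.dst z = w => h ▸ hwC) hzw⟩
    have hge : G.degreeIn F w ≤ G.degreeIn EM w := degreeIn_le_degreeIn fun z hz _ => hz.1
    exact hleaf w (by omega)
  · have hyd : y = d := by
      by_contra hyd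
      have := hC y (hFT hyF) hyd
      rcases hyF.2.2 with h | h <;> rcases hyw with rfl | rfl <;> tauto
    exact hwr (hd (hyd ▸ hyF.1) w hwC (hyd ▸ hyw))

lemma Leafless.mem_of_nonempty (hleaf : G.Leafless EM) (hT : G.IsSpanningTree T)
    (hEM : EM ⊆ T ∪ {e}) (hne : EM.Nonempty) : e ∈ EM := by
  by_contra heEM
  have hEMT : EM ⊆ T := fun x hx => (hEM hx).resolve_right fun h => heEM (h ▸ hx)
  obtain ⟨w, -, hw⟩ := exists_ne_degreeIn_eq_one hT.1 hEMT
    (fun x hx => hT.isBridgeIn (hEMT hx)) hne (G.src e)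
  exact hleaf w hw

lemma Leafless.not_reaches (hleaf : G.Leafless EM) (hT : G.IsSpanningTree T) (he : e ∉ T)
    (hEM : EM ⊆ T ∪ {e}) (hc : c ∈ EM) (hcT : c ∈ T) :
    ¬ G.Reaches (T \ {c}) (G.src e) (G.dst e) := by
  intro hr
  obtain ⟨r, hr'⟩ : ∃ r, ∀ w, G.IsEndpoint c w → G.Reaches (T \ {c}) (G.src e) w → w = r := by
    by_cases hs : G.Reaches (T \ {c}) (G.src e) (G.src c)
    · exact ⟨G.src c, fun w hw hrw => hw.elim Eq.symm fun hw =>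
        absurd (hs.symm.trans (hw ▸ hrw)) (hT.isBridgeIn hcT)⟩
    · exact ⟨G.dst c, fun w hw hrw => hw.elim (fun hw => absurd (hw ▸ hrw) hs) Eq.symm⟩
  have := hleaf.src_dst_not_mem hT hEM (C := {v | ¬ G.Reaches (T \ {c}) (G.src e) v})
    (fun x hx hxc => not_congr (reaches_src_iff_reaches_dst hx hxc _))
    (fun w hw hwe => absurd (hwe.elim (· ▸ Reaches.refl) (· ▸ hr)) hw)
    (fun _ w hw hcw => hr' w hcw (not_not.1 hw)) hc fun h => he (h ▸ hcT)
  exact hT.isBridgeIn hcT ((not_not.1 this.1).symm.trans (not_not.1 this.2))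

lemma Leafless.mem_of_not_reaches (hleaf : G.Leafless EM) (hT : G.IsSpanningTree T)
    (hEM : EM ⊆ T ∪ {e}) (hne : EM.Nonempty)
    (hr : ¬ G.Reaches (T \ {c}) (G.src e) (G.dst e)) : c ∈ EM := by
  by_contra hcEM
  have heEM := hleaf.mem_of_nonempty hT hEM hne
  have hdeg : 1 < G.degreeIn EM (G.src e) := by
    have := degreeIn_pos_iff.2 ⟨e, heEM, Or.inl rfl⟩
    have := hleaf (G.src e)
    omega
  obtain ⟨x, hx, hxe, hxw⟩ := exists_mem_ne_of_one_lt_degreeIn hdeg e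
  have := hleaf.src_dst_not_mem hT hEM (C := {v | G.Reaches (T \ {c}) (G.src e) v})
    (fun x hx hxc => reaches_src_iff_reaches_dst hx hxc _)
    (fun w hw hwe => hwe.elim Eq.symm fun h => absurd (h ▸ hw) hr)
    (fun h => absurd h hcEM) hx hxe
  rcases hxw with h | h
  exacts [this.1 (h ▸ Reaches.refl), this.2 (h ▸ Reaches.refl)]

theorem Leafless.eq_cycleEdges (hleaf : G.Leafless EM) (hT : G.IsSpanningTree T) (he : e ∉ T)
    (hEM : EM ⊆ T ∪ {e}) (hne : EM.Nonempty) : EM = G.cycleEdges T e := by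
  ext c
  constructor
  · intro hc
    refine ⟨hEM hc, ?_⟩
    rcases hEM hc with hcT | hce
    · exact (spanningConnected_union_diff_iff hT he hcT).2 (hleaf.not_reaches hT he hEM hc hcT)
    · rw [Set.mem_singleton_iff.1 hce]
      exact fun v w => (hT.1 v w).mono fun x hx => ⟨Or.inl hx, fun h => he (h ▸ hx)⟩
  · rintro ⟨hcT | hce, hcS⟩
    · exact hleaf.mem_of_not_reaches hT hEM hne ((spanningConnected_union_diff_iff hT he hcT).1 hcS)
    · exact Set.mem_singleton_iff.1 hce ▸ hleaf.mem_of_nonempty hT hEM hne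

end Cycle

section Edges

variable {f : G.Point → ℝ} {c : G.E} {m : ℝ}

@[simp]
lemma canonical_inl (v : G.V) : G.canonical (Sum.inl v) = G.valAt v - 2 := rfl

@[simp]
lemma canonical_inr (q : Σ c : G.E, {t : ℝ // 0 < t ∧ t < G.len c}) :
    G.canonical (Sum.inr q) = 0 := rfl

lemma edgeFun_zero (f : G.Point → ℝ) (c : G.E) : G.edgeFun f c 0 = f (Sum.inl (G.src c)) := by
  simp [edgeFun]

lemma edgeFun_len (f : G.Point → ℝ) (c : G.E) :
    G.edgeFun f c (G.len c) = f (Sum.inl (G.dst c)) := by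
  simp [edgeFun, (G.len_pos c).not_ge]

lemma edgeFun_of_mem_Ioo {t : ℝ} (ht : 0 < t ∧ t < G.len c) :
    G.edgeFun f c t = f (Sum.inr ⟨c, t, ht⟩) := dif_pos ht

lemma exists_eq_edgeFun (f : G.Point → ℝ) (c : G.E) (x : ℝ) : ∃ p, f p = G.edgeFun f c x := by
  unfold edgeFun
  split_ifs <;> exact ⟨_, rfl⟩

lemma le_edgeFun (hm : ∀ p, m ≤ f p) (c : G.E) (x : ℝ) : m ≤ G.edgeFun f c x :=
  let ⟨p, hp⟩ := exists_eq_edgeFun f c x; hp ▸ hm p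

lemma inl_mem_onEdge {v : G.V} (hv : G.IsEndpoint c v) : Sum.inl v ∈ G.onEdge c :=
  hv.elim (fun h => Or.inl (h ▸ rfl)) fun h => Or.inr (Or.inl (h ▸ rfl))

lemma IsTropicalRational.exists_forall_le (hf : G.IsTropicalRational f) : ∃ p, ∀ q, f p ≤ f q := by
  have : Nonempty G.V := G.nonemptyV
  choose x hx hxmin using fun c => isCompact_Icc.exists_isMinOn
    (nonempty_Icc.2 (G.len_pos c).le) (hf c).continuousOn
  choose p hp using fun c => exists_eq_edgeFun f c (x c)
  obtain ⟨p₀, -, hp₀⟩ := (Finset.univ.image Sum.inl ∪ Finset.univ.image p).exists_min_image f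
    ⟨Sum.inl (Classical.arbitrary _), by simp⟩
  refine ⟨p₀, fun q => ?_⟩
  rcases q with v | ⟨c, t, ht⟩
  · exact hp₀ _ (by simp)
  · calc f p₀ ≤ f (p c) := hp₀ _ (by simp)
      _ = G.edgeFun f c (x c) := hp c
      _ ≤ G.edgeFun f c t := hxmin c ⟨ht.1.le, ht.2.le⟩
      _ = f (Sum.inr ⟨c, t, ht⟩) := edgeFun_of_mem_Ioo ht

variable (G) in
def levelEdges (f : G.Point → ℝ) (m : ℝ) : Set G.E :=
  {c | ∀ x ∈ Icc 0 (G.len c), G.edgeFun f c x = m}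

lemma onEdge_subset_of_mem_levelEdges (hc : c ∈ G.levelEdges f m) : G.onEdge c ⊆ {p | f p = m} := by
  rintro p (rfl | rfl | ⟨⟨t, ht⟩, rfl⟩)
  · exact (edgeFun_zero f c).symm.trans (hc 0 ⟨le_rfl, (G.len_pos c).le⟩)
  · exact (edgeFun_len f c).symm.trans (hc _ ⟨(G.len_pos c).le, le_rfl⟩)
  · exact (edgeFun_of_mem_Ioo ht).symm.trans (hc t ⟨ht.1.le, ht.2.le⟩)

end Edges

section Divisor

variable {f : G.Point → ℝ} {D : G.Point → ℤ} {c : G.E} {m : ℝ}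

/-- At an interior minimum both outgoing slopes are nonnegative while their sum is `-D ≤ 0`. -/
lemma HasDivisor.eq_zero_and_eventuallyEq_of_isMin (hf : G.HasDivisor f D)
    {q : Σ c : G.E, {t : ℝ // 0 < t ∧ t < G.len c}} (hq : 0 ≤ D (Sum.inr q))
    (hmin : ∀ p, f (Sum.inr q) ≤ f p) :
    D (Sum.inr q) = 0 ∧ ∀ᶠ y in 𝓝 q.2.1, G.edgeFun f q.1 y = f (Sum.inr q) := by
  obtain ⟨c, t, ht⟩ := q
  obtain ⟨sr, sl, hsr, hsl, hsum⟩ := hf.2 (Sum.inr ⟨c, t, ht⟩)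
  have hg : ∀ x, G.edgeFun f c t ≤ G.edgeFun f c x :=
    (edgeFun_of_mem_Ioo ht).symm ▸ le_edgeFun hmin c
  have hD : (0 : ℝ) ≤ D (Sum.inr ⟨c, t, ht⟩) := by exact_mod_cast hq
  have h₁ := hsr.nonneg hg
  have h₂ := hsl.nonneg hg
  obtain ⟨k₁, rfl, δ₁, hδ₁, -, haff₁⟩ := (hf.1 c).affine_right_of_hasRightSlope ht.1.le ht.2 hsr
  obtain ⟨k₂, rfl, δ₂, hδ₂, -, haff₂⟩ := (hf.1 c).affine_left_of_hasLeftSlope ht.1 ht.2.le hsl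
  have hk₁ : (k₁ : ℝ) = 0 := by linarith
  have hk₂ : (k₂ : ℝ) = 0 := by linarith
  refine ⟨by exact_mod_cast (by linarith : (D (Sum.inr ⟨c, t, ht⟩) : ℝ) = 0), ?_⟩
  filter_upwards [Icc_mem_nhds (sub_lt_self t hδ₂) (lt_add_of_pos_right t hδ₁)] with y hy
  rw [← edgeFun_of_mem_Ioo (f := f) ht]
  rcases le_total y t with hyt | hyt
  · rw [haff₂ y ⟨hy.1, hyt⟩, hk₂, zero_mul, add_zero]
  · rw [haff₁ y ⟨hyt, hy.2⟩, hk₁, zero_mul, add_zero]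

lemma HasDivisor.mem_levelEdges (hf : G.HasDivisor f D) (hD : ∀ t, 0 ≤ D (Sum.inr ⟨c, t⟩))
    (hm : ∀ p, m ≤ f p) {t : ℝ} (ht : t ∈ Ioo 0 (G.len c)) (hgt : G.edgeFun f c t = m) :
    c ∈ G.levelEdges f m := by
  refine (hf.1 c).continuousOn.eqOn_const_of_locally_const (fun x hx hgx => ?_) ht hgt
  have hfx : f (Sum.inr ⟨c, x, hx⟩) = m := (edgeFun_of_mem_Ioo hx).symm.trans hgx
  have := (hf.eq_zero_and_eventuallyEq_of_isMin (hD _) (hfx ▸ hm)).2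
  rwa [hfx] at this

lemma HasDivisor.eq_zero_of_mem_levelEdges (hf : G.HasDivisor f D)
    (hD : ∀ t, 0 ≤ D (Sum.inr ⟨c, t⟩)) (hm : ∀ p, m ≤ f p) (hc : c ∈ G.levelEdges f m)
    (t : {t : ℝ // 0 < t ∧ t < G.len c}) : D (Sum.inr ⟨c, t⟩) = 0 := by
  have hft : f (Sum.inr ⟨c, t⟩) = m := onEdge_subset_of_mem_levelEdges hc (Or.inr (Or.inr ⟨t, rfl⟩))
  exact (hf.eq_zero_and_eventuallyEq_of_isMin (hD t) (hft ▸ hm)).1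

/-- The outgoing slope of `f` at the source of an edge is a nonnegative integer, and it vanishes
only if `f` is constant along the edge. -/
lemma HasDivisor.ite_le_rightSlope (hf : G.HasDivisor f D) (hD : ∀ t, 0 ≤ D (Sum.inr ⟨c, t⟩))
    (hm : ∀ p, m ≤ f p) (hv : f (Sum.inl (G.src c)) = m) {s : ℝ}
    (hs : HasRightSlope (G.edgeFun f c) 0 s) :
    (if c ∈ G.levelEdges f m then 0 else 1 : ℝ) ≤ s := by
  have hg₀ : G.edgeFun f c 0 = m := (edgeFun_zero f c).trans hv
  have h₀ := hs.nonneg (hg₀ ▸ le_edgeFun hm c)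
  obtain ⟨k, rfl, δ, hδ, hδL, haff⟩ :=
    (hf.1 c).affine_right_of_hasRightSlope le_rfl (G.len_pos c) hs
  split_ifs with hc
  · exact h₀
  · have hk : k ≠ 0 := by
      rintro rfl
      refine hc (hf.mem_levelEdges hD hm (t := δ / 2) ⟨by linarith, by linarith⟩ ?_)
      rw [haff _ ⟨by linarith, by linarith⟩, hg₀]
      simp
    have : (0 : ℤ) ≤ k := by exact_mod_cast h₀
    exact_mod_cast (by omega : (1 : ℤ) ≤ k)

lemma HasDivisor.ite_le_leftSlope (hf : G.HasDivisor f D) (hD : ∀ t, 0 ≤ D (Sum.inr ⟨c, t⟩))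
    (hm : ∀ p, m ≤ f p) (hv : f (Sum.inl (G.dst c)) = m) {s : ℝ}
    (hs : HasLeftSlope (G.edgeFun f c) (G.len c) s) :
    (if c ∈ G.levelEdges f m then 0 else 1 : ℝ) ≤ s := by
  have hgL : G.edgeFun f c (G.len c) = m := (edgeFun_len f c).trans hv
  have h₀ := hs.nonneg (hgL ▸ le_edgeFun hm c)
  obtain ⟨k, rfl, δ, hδ, hδL, haff⟩ :=
    (hf.1 c).affine_left_of_hasLeftSlope (G.len_pos c) le_rfl hs
  split_ifs with hc
  · exact h₀
  · have hk : k ≠ 0 := by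
      rintro rfl
      refine hc (hf.mem_levelEdges hD hm (t := G.len c - δ / 2) ⟨by linarith, by linarith⟩ ?_)
      rw [haff _ ⟨by linarith, by linarith⟩, hgL]
      simp
    have : (0 : ℤ) ≤ k := by exact_mod_cast h₀
    exact_mod_cast (by omega : (1 : ℤ) ≤ k)

end Divisor

section Minimum

variable {f : G.Point → ℝ} {D : G.Point → ℤ} {m : ℝ}

/-- At a vertex `v` where `f` is minimal, every edge on which `f` is not constant contributes at
least `1` to the outgoing slope sum `val v - 2 - D v`. -/
lemma HasDivisor.two_le_degreeIn_levelEdges (hf : G.HasDivisor f (fun p => D p - G.canonical p))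
    (hD : ∀ p, 0 ≤ D p) (hm : ∀ p, m ≤ f p) {v : G.V} (hv : f (Sum.inl v) = m) :
    2 ≤ G.degreeIn (G.levelEdges f m) v := by
  obtain ⟨sOut, sIn, hOut, hIn, hsum⟩ := hf.2 (Sum.inl v)
  have hD' : ∀ c t, 0 ≤ D (Sum.inr ⟨c, t⟩) - G.canonical (Sum.inr ⟨c, t⟩) := fun c t => by
    simpa using hD _
  have h₁ := (Finset.univ.filter fun c => G.src c = v).card_sub_card_filter_le_sum
    (G.levelEdges f m) sOut fun c hc => by
      have hc : G.src c = v := (Finset.mem_filter.1 hc).2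
      exact hf.ite_le_rightSlope (hD' c) hm (hc ▸ hv) (hOut c hc)
  have h₂ := (Finset.univ.filter fun c => G.dst c = v).card_sub_card_filter_le_sum
    (G.levelEdges f m) sIn fun c hc => by
      have hc : G.dst c = v := (Finset.mem_filter.1 hc).2
      exact hf.ite_le_leftSlope (hD' c) hm (hc ▸ hv) (hIn c hc)
  have hDv : (0 : ℝ) ≤ D (Sum.inl v) := by exact_mod_cast hD _
  simp only [canonical_inl, valAt, Finset.filter_filter] at hsum h₁ h₂
  push_cast at hsum
  have : (2 : ℝ) ≤ (Finset.univ.filter fun c => G.src c = v ∧ c ∈ G.levelEdges f m).card +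
      (Finset.univ.filter fun c => G.dst c = v ∧ c ∈ G.levelEdges f m).card := by
    linarith
  exact_mod_cast this

lemma HasDivisor.leafless_levelEdges (hf : G.HasDivisor f (fun p => D p - G.canonical p))
    (hD : ∀ p, 0 ≤ D p) (hm : ∀ p, m ≤ f p) : G.Leafless (G.levelEdges f m) := fun v hv => by
  obtain ⟨c, hc, hcv⟩ := degreeIn_pos_iff.1 (hv ▸ Nat.one_pos)
  have := hf.two_le_degreeIn_levelEdges hD hm
    (onEdge_subset_of_mem_levelEdges hc (inl_mem_onEdge hcv))
  omega

lemma HasDivisor.setOf_eq_biUnion_levelEdges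
    (hf : G.HasDivisor f (fun p => D p - G.canonical p)) (hD : ∀ p, 0 ≤ D p)
    (hm : ∀ p, m ≤ f p) : {p | f p = m} = ⋃ c ∈ G.levelEdges f m, G.onEdge c := by
  ext p
  constructor
  · intro hp
    rcases p with v | ⟨c, t, ht⟩
    · obtain ⟨c, hc, hcv⟩ := degreeIn_pos_iff.1
        (Nat.lt_of_lt_of_le Nat.two_pos (hf.two_le_degreeIn_levelEdges hD hm hp))
      exact mem_biUnion hc (inl_mem_onEdge hcv)
    · have hc := hf.mem_levelEdges (fun t => by simpa using hD _) hm ht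
        ((edgeFun_of_mem_Ioo ht).trans hp)
      exact mem_biUnion hc (Or.inr (Or.inr ⟨⟨t, ht⟩, rfl⟩))
  · simp only [mem_iUnion₂]
    rintro ⟨c, hc, hp⟩
    exact onEdge_subset_of_mem_levelEdges hc hp

end Minimum

end LooplessMetricGraph

theorem statement_16_general (G : LooplessMetricGraph)
    (T : Set G.E) (hT : G.IsSpanningTree T) (e : G.E) (he : e ∉ T)
    (D : G.Point → ℤ)
    (hDeff : ∀ p, 0 ≤ D p)
    (hDsupp : ∀ e' : G.E, e' ∉ T → e' ≠ e →
      ∃ t : {t : ℝ // 0 < t ∧ t < G.len e'}, D (Sum.inr ⟨e', t⟩) ≠ 0)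
    (f : G.Point → ℝ)
    (hf : G.HasDivisor f (fun p => D p - G.canonical p)) :
    {p | ∀ q, f p ≤ f q} = G.cycleSet T e := by
  obtain ⟨p₀, hp₀⟩ := hf.1.exists_forall_le
  have hmin : {p | ∀ q, f p ≤ f q} = {p | f p = f p₀} :=
    Set.ext fun p => ⟨fun h => le_antisymm (h p₀) (hp₀ p), fun h q => h ▸ hp₀ q⟩
  have hlevel := hf.setOf_eq_biUnion_levelEdges hDeff hp₀
  have hsub : G.levelEdges f (f p₀) ⊆ T ∪ {e} := fun c hc => by
    by_contra hcU
    obtain ⟨t, ht⟩ := hDsupp c (fun h => hcU (Or.inl h)) (fun h => hcU (Or.inr h))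
    have := hf.eq_zero_of_mem_levelEdges (fun t => by simpa using hDeff _) hp₀ hc t
    exact ht (by simpa using this)
  have hne : (G.levelEdges f (f p₀)).Nonempty := by
    have hp₀_mem : p₀ ∈ {p | f p = f p₀} := rfl
    rw [hlevel, mem_iUnion₂] at hp₀_mem
    obtain ⟨c, hc, -⟩ := hp₀_mem
    exact ⟨c, hc⟩
  rw [hmin, hlevel, (hf.leafless_levelEdges hDeff hp₀).eq_cycleEdges hT he hsub hne]
  rfl

/-- **Lemma 3.23.**  Let `G` be a finite connected discrete graph without
loops and let `Γ` be its associated metric graph.  Let `T` be a spanning tree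
of `Γ`, let `e` be an edge of `Γ` not contained in `T`, and let `Z(T, e)` be
the unique cycle in `T ∪ e`.  Let `D` be an effective divisor on `Γ`
equivalent to the canonical divisor `K_G` whose support contains a point from
the relative interior of each edge `e_i ≠ e` contained in the complement of
`T`.  If `f` is a tropical rational function on `Γ` with
`div(f) = D − K_G`, then the locus of points of `Γ` where `f` achieves its
minimum value is equal to `Z(T, e)`. -/
theorem statement_16 (G : LooplessMetricGraph) (hconn : G.Connected)
    (T : Set G.E) (hT : G.IsSpanningTree T) (e : G.E) (he : e ∉ T)
    (D : G.Point → ℤ) (hDfin : (Function.support D).Finite)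
    (hDeff : ∀ p, 0 ≤ D p)
    (hDsupp : ∀ e' : G.E, e' ∉ T → e' ≠ e →
      ∃ t : {t : ℝ // 0 < t ∧ t < G.len e'}, D (Sum.inr ⟨e', t⟩) ≠ 0)
    (f : G.Point → ℝ)
    (hf : G.HasDivisor f (fun p => D p - G.canonical p)) :
    {p | ∀ q, f p ≤ f q} = G.cycleSet T e :=
  statement_16_general G T hT e he D hDeff hDsupp f hf
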